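/- arXiv:2308.15598 — 2 statements merged into one kernel-verified Lean document; each statement's English description precedes it below -/
import Mathlib

section
/- Let A ∈ ℕ^{d×n} have the all-ones vector in its row span, with discrete exponential family E_A, let b ∈ ℝ^d, and let Q_b = {u ∈ Δ_{n−1} : Au = b}. Let v be an extreme point of Q_b and let F ⊆ Q_b be a nonempty face of Q_b (a convex subset that is extreme in Q_b) with supp(F) = {1,…,n} \ supp(v), where supp(F) = ⋃_{f∈F} supp(f). Let L_{v,F} = ⋃_{f∈F} {v + t·(f − v) : t ∈ ℝ} be the union of the lines through v and the points of F. Then there exists q ∈ E_A with Aq = b and v_i = q_i/(Σ_{j∈supp(v)} q_j) for all i ∈ supp(v) (i.e., v is a projection point) if and only if L_{v,F} ∩ E_A ≠ ∅. -/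
open scoped BigOperators Pointwise

attribute [local instance] Classical.propDecidable

def simplex (ι : Type*) [Fintype ι] : Set (ι → ℝ) :=
  {p | (∀ i, 0 ≤ p i) ∧ ∑ i, p i = 1}

noncomputable def KL {ι : Type*} [Fintype ι] (p q : ι → ℝ) : EReal :=
  if ∀ i, q i = 0 → p i = 0 then (((∑ i, p i * Real.log (p i / q i)) : ℝ) : EReal) else ⊤

noncomputable def divFrom {ι : Type*} [Fintype ι] (M : Set (ι → ℝ)) (p : ι → ℝ) : EReal :=
  ⨅ q ∈ M, KL p q

noncomputable def EA {κ ι : Type*} [Fintype κ] [Fintype ι] (A : Matrix κ ι ℕ) : Set (ι → ℝ) :=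
  {p | ∃ θ : κ → ℝ, ∀ j, p j =
    Real.exp (∑ i, θ i * (A i j : ℝ)) / ∑ l, Real.exp (∑ i, θ i * (A i l : ℝ))}

/-!
Every point of `F` vanishes on `supp v`, so a point `v + t • (f - v)` of a line of `L_{v,F}`
equals `(1 - t) • v` on `supp v` and satisfies `A x = b`; for `x ∈ E_A` this makes `v` the
projection point of `x`. Conversely, if `q ∈ E_A` with `A q = b` equals `c • v` on `supp v`, then
`q = c • v + (1 - c) • w` with `w ∈ Q_b` supported in `supp F`, and `q` lies on the line through
`v` and `w`. The crux is that `w ∈ F`: the convex set `F` contains a point `f₀` with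
`supp f₀ = supp F ⊇ supp w`, so `f₀` lies in the open segment between `w` and a point of `Q_b`
slightly beyond `f₀`, and extremality of `F` puts `w` into `F`.
-/

open Function

theorem nonempty_of_mem_simplex {ι : Type*} [Fintype ι] {p : ι → ℝ} (hp : p ∈ simplex ι) :
    Nonempty ι := by
  obtain ⟨i, -, -⟩ := Finset.exists_ne_zero_of_sum_ne_zero (hp.2 ▸ one_ne_zero)
  exact ⟨i⟩

section EA

variable {κ ι : Type*} [Fintype κ] [Fintype ι] (A : Matrix κ ι ℕ) {q : ι → ℝ}

theorem pos_of_mem_EA (hq : q ∈ EA A) (j : ι) : 0 < q j := by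
  obtain ⟨θ, hθ⟩ := hq
  rw [hθ j]
  have : Nonempty ι := ⟨j⟩
  exact div_pos (Real.exp_pos _) (Finset.sum_pos (fun l _ => Real.exp_pos _) Finset.univ_nonempty)

theorem sum_eq_one_of_mem_EA [Nonempty ι] (hq : q ∈ EA A) : ∑ j, q j = 1 := by
  obtain ⟨θ, hθ⟩ := hq
  simp only [hθ]
  rw [← Finset.sum_div, div_self]
  exact (Finset.sum_pos (fun l _ => Real.exp_pos _) Finset.univ_nonempty).ne'

end EA

theorem forall_eq_div_sum_support_iff {ι : Type*} [Fintype ι] {v x : ι → ℝ}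
    (hv : ∑ i, v i = 1) :
    (∀ i, v i ≠ 0 → v i = x i / ∑ j, if v j = 0 then 0 else x j) ↔
      ∃ c ≠ 0, ∀ i, v i ≠ 0 → x i = c * v i := by
  constructor
  · intro h
    obtain ⟨i, -, hi⟩ := Finset.exists_ne_zero_of_sum_ne_zero (hv ▸ one_ne_zero)
    have hs : (∑ j, if v j = 0 then 0 else x j) ≠ 0 := fun hs => hi (by simpa [hs] using h i hi)
    exact ⟨_, hs, fun i hi => by rw [h i hi, mul_div_cancel₀ _ hs]⟩
  · rintro ⟨c, hc, h⟩ i hi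
    have hs : (∑ j, if v j = 0 then 0 else x j) = c := by
      rw [← mul_one c, ← hv, Finset.mul_sum]
      refine Finset.sum_congr rfl fun j _ => ?_
      split_ifs with hj
      · simp [hj]
      · exact h j hj
    rw [hs, h i hi, mul_div_cancel_left₀ _ hc]

theorem Convex.exists_iUnion_support_subset {ι : Type*} [Finite ι] {F : Set (ι → ℝ)}
    (hFc : Convex ℝ F) (hFne : F.Nonempty) (hF : ∀ f ∈ F, ∀ i, 0 ≤ f i) :
    ∃ f₀ ∈ F, ⋃ f ∈ F, support f ⊆ support f₀ := by
  have key : ∀ S : Finset ι, ↑S ⊆ ⋃ f ∈ F, support f → ∃ f₀ ∈ F, ∀ i ∈ S, 0 < f₀ i := by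
    intro S
    induction S using Finset.induction_on with
    | empty => exact fun _ => ⟨hFne.some, hFne.some_mem, by simp⟩
    | insert i S _ ih =>
      intro hS
      rw [Finset.coe_insert, Set.insert_subset_iff] at hS
      obtain ⟨f₀, hf₀, hf₀pos⟩ := ih hS.2
      obtain ⟨g, hg, hgi⟩ := Set.mem_iUnion₂.1 hS.1
      refine ⟨(1 / 2 : ℝ) • f₀ + (1 / 2 : ℝ) • g, hFc hf₀ hg (by norm_num) (by norm_num)
        (by norm_num), ?_⟩
      have hf₀nn := hF f₀ hf₀
      have hgnn := hF g hg
      intro j hj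
      simp only [Pi.add_apply, Pi.smul_apply, smul_eq_mul]
      rcases Finset.mem_insert.1 hj with rfl | hj
      · have : 0 < g j := (hgnn j).lt_of_ne' hgi
        linarith [hf₀nn j]
      · linarith [hf₀pos j hj, hgnn j]
  obtain ⟨f₀, hf₀, hpos⟩ := key (Set.toFinite (⋃ f ∈ F, support f)).toFinset (by simp)
  exact ⟨f₀, hf₀, fun i hi => (hpos i (by simpa using hi)).ne'⟩

/-- The logarithmic Voronoi polytope `Q_b`, for a real matrix `M` in place of `A`. -/
def simplexFiber {κ ι : Type*} [Fintype ι] (M : Matrix κ ι ℝ) (b : κ → ℝ) : Set (ι → ℝ) :=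
  {u | u ∈ simplex ι ∧ M.mulVec u = b}

namespace simplexFiber

variable {κ ι : Type*} [Fintype ι] {M : Matrix κ ι ℝ} {b : κ → ℝ}

theorem add_smul_sub_mem {x y : ι → ℝ} (hx : x ∈ simplexFiber M b) (hy : y ∈ simplexFiber M b)
    {t : ℝ} (hnonneg : ∀ i, 0 ≤ (x + t • (y - x)) i) : x + t • (y - x) ∈ simplexFiber M b := by
  obtain ⟨⟨-, hx1⟩, hxb⟩ := hx
  obtain ⟨⟨-, hy1⟩, hyb⟩ := hy
  refine ⟨⟨hnonneg, ?_⟩, ?_⟩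
  · simp [Finset.sum_add_distrib, ← Finset.mul_sum, Finset.sum_sub_distrib, hx1, hy1]
  · simp [Matrix.mulVec_add, Matrix.mulVec_smul, Matrix.mulVec_sub, hxb, hyb]

theorem exists_mem_openSegment_of_support_subset {f w : ι → ℝ} (hf : f ∈ simplexFiber M b)
    (hw : w ∈ simplexFiber M b) (hsupp : support w ⊆ support f) :
    ∃ z ∈ simplexFiber M b, f ∈ openSegment ℝ z w := by
  -- `z := f + δ • (f - w)` is nonnegative as soon as `δ • w ≤ f`.
  have hsmall : ∀ᶠ δ in nhdsWithin (0 : ℝ) (Set.Ioi 0), ∀ i, δ * w i ≤ f i := by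
    refine Filter.eventually_all.2 fun i => ?_
    by_cases hfi : f i = 0
    · have hwi : w i = 0 := by_contra fun hwi => hsupp hwi hfi
      exact Filter.Eventually.of_forall fun δ => by simp [hwi, hfi]
    · have hlim : Filter.Tendsto (fun δ : ℝ => δ * w i) (nhds 0) (nhds 0) :=
        (continuous_mul_const (w i)).tendsto' 0 0 (zero_mul _)
      exact nhdsWithin_le_nhds ((hlim.eventually (gt_mem_nhds
        ((hf.1.1 i).lt_of_ne' hfi))).mono fun δ hδ => hδ.le)
  obtain ⟨δ, hδw, hδ⟩ := (hsmall.and self_mem_nhdsWithin).exists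
  have hδ : (0 : ℝ) < δ := hδ
  refine ⟨f + (-δ) • (w - f), add_smul_sub_mem hf hw fun i => ?_,
    1 / (1 + δ), δ / (1 + δ), by positivity, by positivity, by field_simp, ?_⟩
  · simp only [Pi.add_apply, Pi.smul_apply, Pi.sub_apply, smul_eq_mul]
    nlinarith [hf.1.1 i, hδw i]
  · ext i
    simp only [Pi.add_apply, Pi.smul_apply, Pi.sub_apply, smul_eq_mul]
    field_simp
    ring

theorem mem_of_isExtreme_of_support_subset {F : Set (ι → ℝ)}
    (hF : IsExtreme ℝ (simplexFiber M b) F) (hFc : Convex ℝ F) (hFne : F.Nonempty)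
    {w : ι → ℝ} (hw : w ∈ simplexFiber M b) (hsupp : support w ⊆ ⋃ f ∈ F, support f) :
    w ∈ F := by
  obtain ⟨f₀, hf₀, hf₀supp⟩ :=
    hFc.exists_iUnion_support_subset hFne fun f hf => (hF.1 hf).1.1
  obtain ⟨z, hz, hseg⟩ :=
    exists_mem_openSegment_of_support_subset (hF.1 hf₀) hw (hsupp.trans hf₀supp)
  exact hF.right_mem_of_mem_openSegment hz hw hf₀ hseg

end simplexFiber

namespace simplexFiber

variable {κ ι : Type*} [Fintype ι] {M : Matrix κ ι ℝ} {b : κ → ℝ} {v x : ι → ℝ}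

theorem exists_mem_line_of_eq_mul_on_support {F : Set (ι → ℝ)} (hv : v ∈ simplexFiber M b)
    (hF : IsExtreme ℝ (simplexFiber M b) F) (hFc : Convex ℝ F) (hFne : F.Nonempty)
    (hsupp : ⋃ f ∈ F, support f = (support v)ᶜ) (hxpos : ∀ i, 0 < x i) (hx1 : ∑ i, x i = 1)
    (hxb : M.mulVec x = b) {c : ℝ} (hc : ∀ i, v i ≠ 0 → x i = c * v i) :
    ∃ f ∈ F, ∃ t : ℝ, x = v + t • (f - v) := by
  have hx : x ∈ simplexFiber M b := ⟨⟨fun i => (hxpos i).le, hx1⟩, hxb⟩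
  obtain ⟨j, hj⟩ : ∃ j, v j = 0 := by
    obtain ⟨f, hf⟩ := hFne
    obtain ⟨j, -, hj⟩ := Finset.exists_ne_zero_of_sum_ne_zero ((hF.1 hf).1.2 ▸ one_ne_zero)
    have : j ∈ (support v)ᶜ := hsupp ▸ Set.mem_iUnion₂.2 ⟨f, hf, hj⟩
    exact ⟨j, by simpa using this⟩
  have hc1 : c < 1 :=
    calc c = ∑ i, c * v i := by rw [← Finset.mul_sum, hv.1.2, mul_one]
      _ < ∑ i, x i := by
        refine Finset.sum_lt_sum (fun i _ => ?_) ⟨j, Finset.mem_univ _, by simp [hj, hxpos j]⟩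
        by_cases hi : v i = 0
        · simp [hi, (hxpos i).le]
        · exact (hc i hi).ge
      _ = 1 := hx1
  set w := v + (1 - c)⁻¹ • (x - v) with hw
  have hw_apply : ∀ i, w i = (x i - c * v i) / (1 - c) := fun i => by
    simp only [hw, Pi.add_apply, Pi.smul_apply, Pi.sub_apply, smul_eq_mul]
    field_simp [(sub_pos.2 hc1).ne']
    ring
  have hwQ : w ∈ simplexFiber M b := add_smul_sub_mem hv hx fun i => by
    rw [← hw, hw_apply]
    by_cases hi : v i = 0
    · simp [hi, (hxpos i).le, (sub_pos.2 hc1).le, div_nonneg]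
    · simp [hc i hi]
  have hwF : w ∈ F := mem_of_isExtreme_of_support_subset hF hFc hFne hwQ <|
    hsupp ▸ fun i hwi hvi => hwi (by rw [hw_apply, hc i hvi, sub_self, zero_div])
  refine ⟨w, hwF, 1 - c, ?_⟩
  ext i
  simp only [Pi.add_apply, Pi.smul_apply, Pi.sub_apply, smul_eq_mul, hw_apply]
  field_simp [(sub_pos.2 hc1).ne']
  ring

theorem mulVec_eq_and_eq_mul_on_support_of_mem_line {f : ι → ℝ} (hv : v ∈ simplexFiber M b)
    (hf : f ∈ simplexFiber M b) (hfv : ∀ i, v i ≠ 0 → f i = 0) {t : ℝ}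
    (hxpos : ∀ i, 0 < (v + t • (f - v)) i) :
    M.mulVec (v + t • (f - v)) = b ∧ ∃ c ≠ 0, ∀ i, v i ≠ 0 → (v + t • (f - v)) i = c * v i := by
  have hline : ∀ i, v i ≠ 0 → (v + t • (f - v)) i = (1 - t) * v i := fun i hvi => by
    simp [hfv i hvi]
    ring
  refine ⟨(add_smul_sub_mem hv hf fun i => (hxpos i).le).2, 1 - t, fun ht => ?_, hline⟩
  obtain ⟨i, -, hi⟩ := Finset.exists_ne_zero_of_sum_ne_zero (hv.1.2 ▸ one_ne_zero)
  have := hxpos i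
  rw [hline i hi, ht, zero_mul] at this
  exact this.false

end simplexFiber

theorem stmt6_general {d n : ℕ} (A : Matrix (Fin d) (Fin n) ℕ)
    (b : Fin d → ℝ)
    (Qb : Set (Fin n → ℝ))
    (hQb : Qb = {u | u ∈ simplex (Fin n) ∧ (A.map (Nat.cast : ℕ → ℝ)).mulVec u = b})
    (v : Fin n → ℝ) (hv : v ∈ Set.extremePoints ℝ Qb)
    (F : Set (Fin n → ℝ)) (hFne : F.Nonempty) (hFconv : Convex ℝ F)
    (hFface : IsExtreme ℝ Qb F)
    (hsupp : (⋃ f ∈ F, Function.support f) = (Function.support v)ᶜ) :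
    (∃ q ∈ EA A, (A.map (Nat.cast : ℕ → ℝ)).mulVec q = b ∧
        ∀ i, v i ≠ 0 → v i = q i / (∑ j, if v j = 0 then 0 else q j)) ↔
      ((⋃ f ∈ F, {x | ∃ t : ℝ, x = v + t • (f - v)}) ∩ EA A).Nonempty := by
  subst hQb
  have hvQ : v ∈ simplexFiber (A.map (Nat.cast : ℕ → ℝ)) b := hv.1
  have : Nonempty (Fin n) := nonempty_of_mem_simplex hvQ.1
  simp only [forall_eq_div_sum_support_iff hvQ.1.2]
  constructor
  · rintro ⟨q, hqE, hqb, c, -, hc⟩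
    obtain ⟨f, hf, t, hq⟩ := simplexFiber.exists_mem_line_of_eq_mul_on_support hvQ hFface hFconv
      hFne hsupp (pos_of_mem_EA A hqE) (sum_eq_one_of_mem_EA A hqE) hqb hc
    exact ⟨q, Set.mem_iUnion₂.2 ⟨f, hf, t, hq⟩, hqE⟩
  · rintro ⟨x, hxL, hxE⟩
    obtain ⟨f, hf, t, rfl⟩ := Set.mem_iUnion₂.1 hxL
    have hfv : ∀ i, v i ≠ 0 → f i = 0 := fun i hvi => by_contra fun hfi =>
      (hsupp ▸ Set.mem_iUnion₂.2 ⟨f, hf, hfi⟩ : i ∈ (Function.support v)ᶜ) hvi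
    exact ⟨_, hxE, simplexFiber.mulVec_eq_and_eq_mul_on_support_of_mem_line hvQ (hFface.1 hf) hfv
      (pos_of_mem_EA A hxE)⟩

/-- A complementary vertex `v` of the logarithmic Voronoi polytope `Q_b` with
complementary face `F` is a projection point (of a point `q ∈ E_A` with `Aq = b`) if and only
if the union `L_{v,F}` of lines through `v` and points of `F` meets `E_A`. -/
theorem stmt6 {d n : ℕ} (A : Matrix (Fin d) (Fin n) ℕ)
    (hone : ∃ c : Fin d → ℝ, ∀ j, ∑ i, c i * (A i j : ℝ) = 1)
    (b : Fin d → ℝ)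
    (Qb : Set (Fin n → ℝ))
    (hQb : Qb = {u | u ∈ simplex (Fin n) ∧ (A.map (Nat.cast : ℕ → ℝ)).mulVec u = b})
    (v : Fin n → ℝ) (hv : v ∈ Set.extremePoints ℝ Qb)
    (F : Set (Fin n → ℝ)) (hFne : F.Nonempty) (hFconv : Convex ℝ F)
    (hFface : IsExtreme ℝ Qb F)
    (hsupp : (⋃ f ∈ F, Function.support f) = (Function.support v)ᶜ) :
    (∃ q ∈ EA A, (A.map (Nat.cast : ℕ → ℝ)).mulVec q = b ∧
        ∀ i, v i ≠ 0 → v i = q i / (∑ j, if v j = 0 then 0 else q j)) ↔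
      ((⋃ f ∈ F, {x | ∃ t : ℝ, x = v + t • (f - v)}) ∩ EA A).Nonempty :=
  stmt6_general A b Qb hQb v hv F hFne hFconv hFface hsupp
end

section
/- Let A ∈ ℕ^{d×n} be a matrix of rank d = n−1 whose row span contains the all-ones vector, and suppose the kernel of A (over ℝ) is spanned by a vector c ∈ ℤⁿ with c_i > 0 for 1 ≤ i ≤ r and c_i < 0 for r+1 ≤ i ≤ n. Define p, p̃ ∈ Δ_{n−1} by p_i = c_i/(Σ_{j≤r} c_j) for i ≤ r and p_i = 0 for i > r, and p̃_i = 0 for i ≤ r and p̃_i = −c_i/(Σ_{j>r} (−c_j)) for i > r. Then sup_{x∈Δ_{n−1}} D_{M_A}(x) = max(D_{M_A}(p), D_{M_A}(p̃)), and every global maximizer of D_{M_A} over Δ_{n−1} equals p or p̃. -/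
/-!
Since `ker A = ℝ c`, the row space of `A` is the hyperplane `c⊥`, so `E_A` is the softmax image of
`c⊥`, and on the simplex `D(x) = inf_{q ∈ E_A} CE(x, q) - H(x)` (cross-entropy minus entropy). The
infimum is constant along the fibre `x + ℝ c`; when the fibre meets `E_A` in a point `y` it equals
`H(y) = CE(x, y)`. This happens unless `x` vanishes at coordinates of both signs of `c`, and then
`x ∈ M_A`, so `D(x) = 0`.

`D` is upper semicontinuous and attains its maximum; a maximiser `x` has `D(x) ≥ D(p) > 0`, so its
fibre meets `E_A` in some `y = x + s c`. Moving mass between two points of the support of `x` in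
both `x` and `y` keeps `y` on the fibre, so stationarity of `H(y) - H(x)` forces `x ∝ y` on the
support of `x`. As `y > 0`, the sign of `s` then forces `x = p` (`s < 0`) or `x = p̃` (`s > 0`).
-/

open scoped BigOperators Pointwise

attribute [local instance] Classical.propDecidable

open Real Finset Filter Topology Matrix

section Entropy

variable {ι : Type*} [Fintype ι]

noncomputable def crossEntropy (x q : ι → ℝ) : ℝ := -∑ j, x j * log (q j)

noncomputable def entropy (x : ι → ℝ) : ℝ := crossEntropy x x

lemma crossEntropy_add_smul (x y q : ι → ℝ) (s : ℝ) :
    crossEntropy (x + s • y) q = crossEntropy x q + s * crossEntropy y q := by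
  simp only [crossEntropy, Pi.add_apply, Pi.smul_apply, smul_eq_mul, add_mul, sum_add_distrib,
    mul_assoc, ← mul_sum]
  ring

lemma continuous_crossEntropy_left (q : ι → ℝ) : Continuous fun x => crossEntropy x q := by
  unfold crossEntropy
  fun_prop

lemma continuous_entropy : Continuous (entropy : (ι → ℝ) → ℝ) :=
  (continuous_finsetSum _ fun j _ => continuous_mul_log.comp (continuous_apply j)).neg

lemma sum_sub_sum_support_le_crossEntropy_sub_entropy {x q : ι → ℝ} (hx : ∀ j, 0 ≤ x j)
    (hq : ∀ j, 0 < q j) :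
    ∑ j, x j - ∑ j with x j ≠ 0, q j ≤ crossEntropy x q - entropy x := by
  rw [sum_filter, entropy, crossEntropy, crossEntropy, neg_sub_neg, ← sum_sub_distrib,
    ← sum_sub_distrib]
  refine sum_le_sum fun j _ => ?_
  split_ifs with h
  · have hxj : 0 < x j := (hx j).lt_of_ne' h
    have hlog := log_le_sub_one_of_pos (div_pos (hq j) hxj)
    rw [log_div (hq j).ne' hxj.ne'] at hlog
    have := mul_le_mul_of_nonneg_left hlog hxj.le
    have hxq : x j * (q j / x j - 1) = q j - x j := by field_simp
    linarith
  · simp [not_not.mp h]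

lemma entropy_le_crossEntropy {x q : ι → ℝ} (hx : x ∈ simplex ι) (hq : ∀ j, 0 < q j)
    (hq1 : ∑ j, q j = 1) : entropy x ≤ crossEntropy x q := by
  have h := sum_sub_sum_support_le_crossEntropy_sub_entropy hx.1 hq
  have : ∑ j with x j ≠ 0, q j ≤ ∑ j, q j :=
    sum_le_sum_of_subset_of_nonneg (filter_subset _ _) fun j _ _ => (hq j).le
  rw [hx.2] at h
  linarith

lemma KL_eq_crossEntropy_sub_entropy {x q : ι → ℝ} (h : ∀ i, q i = 0 → x i = 0) :
    KL x q = ((crossEntropy x q - entropy x : ℝ) : EReal) := by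
  rw [KL, if_pos h, entropy, crossEntropy, crossEntropy, neg_sub_neg, ← sum_sub_distrib]
  refine congrArg _ (sum_congr rfl fun i _ => ?_)
  by_cases hx : x i = 0
  · simp [hx]
  · rw [log_div hx (mt (h i) hx)]
    ring

lemma hasDerivAt_entropy_add_smul {z w : ι → ℝ} (hz : ∀ k, w k ≠ 0 → z k ≠ 0) :
    HasDerivAt (fun t : ℝ => entropy (z + t • w)) (-∑ k, w k * (log (z k) + 1)) 0 := by
  have hk : ∀ k, HasDerivAt (fun t : ℝ => (z k + t * w k) * log (z k + t * w k))
      (w k * (log (z k) + 1)) 0 := by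
    intro k
    by_cases hwk : w k = 0
    · simpa [hwk] using hasDerivAt_const (0 : ℝ) (z k * log (z k))
    · have hline : HasDerivAt (fun t : ℝ => z k + t * w k) (w k) 0 := by
        simpa using ((hasDerivAt_id (0 : ℝ)).mul_const (w k)).const_add (z k)
      simpa [Function.comp_def, mul_comm] using
        (hasDerivAt_mul_log (hz k hwk)).comp_of_eq 0 hline (by simp)
  have hfun : (fun t : ℝ => entropy (z + t • w)) =
      fun t => -∑ k, (z k + t * w k) * log (z k + t * w k) := by
    funext t
    simp [entropy, crossEntropy]
  rw [hfun]
  exact (HasDerivAt.fun_sum fun k _ => hk k).neg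

end Entropy

section InfCrossEntropy

variable {ι : Type*} [Fintype ι] {S : Set (ι → ℝ)} {x q : ι → ℝ}

/-- A real infimum, hence meaningful only where it is bounded below: for `x` in the simplex and
`S` a nonempty set of positive distributions it is at least `entropy x` (Gibbs). -/
noncomputable def infCrossEntropy (S : Set (ι → ℝ)) (x : ι → ℝ) : ℝ :=
  ⨅ q : S, crossEntropy x q

noncomputable def divergence (S : Set (ι → ℝ)) (x : ι → ℝ) : ℝ :=
  infCrossEntropy S x - entropy x

lemma bddBelow_crossEntropy (hS : ∀ q ∈ S, (∀ j, 0 < q j) ∧ ∑ j, q j = 1)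
    (hx : x ∈ simplex ι) : BddBelow (Set.range fun q : S => crossEntropy x q) :=
  ⟨entropy x, by
    rintro _ ⟨q, rfl⟩
    exact entropy_le_crossEntropy hx (hS q q.2).1 (hS q q.2).2⟩

lemma infCrossEntropy_le (hS : ∀ q ∈ S, (∀ j, 0 < q j) ∧ ∑ j, q j = 1) (hx : x ∈ simplex ι)
    (hq : q ∈ S) : infCrossEntropy S x ≤ crossEntropy x q :=
  ciInf_le (bddBelow_crossEntropy hS hx) ⟨q, hq⟩

lemma entropy_le_infCrossEntropy (hS : ∀ q ∈ S, (∀ j, 0 < q j) ∧ ∑ j, q j = 1)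
    (hne : S.Nonempty) (hx : x ∈ simplex ι) : entropy x ≤ infCrossEntropy S x :=
  have := hne.to_subtype
  le_ciInf fun q => entropy_le_crossEntropy hx (hS q q.2).1 (hS q q.2).2

lemma infCrossEntropy_le_of_mem_closure (hS : ∀ q ∈ S, (∀ j, 0 < q j) ∧ ∑ j, q j = 1)
    (hx : x ∈ simplex ι) (hq : q ∈ closure S) (hsupp : ∀ i, q i = 0 → x i = 0) :
    infCrossEntropy S x ≤ crossEntropy x q := by
  have hcont : ContinuousAt (fun q => crossEntropy x q) q := by
    refine (tendsto_finsetSum _ fun j _ => ?_).neg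
    by_cases hxj : x j = 0
    · simp [hxj]
    · exact ((continuousAt_log (mt (hsupp j) hxj)).comp (f := fun p : ι → ℝ => p j)
        (continuousAt_apply j q)).const_mul (x j)
  exact ContinuousWithinAt.closure_le hq continuousWithinAt_const hcont.continuousWithinAt
    fun q' hq' => infCrossEntropy_le hS hx hq'

lemma divergence_le_zero_of_mem_closure (hS : ∀ q ∈ S, (∀ j, 0 < q j) ∧ ∑ j, q j = 1)
    (hx : x ∈ simplex ι) (hxS : x ∈ closure S) : divergence S x ≤ 0 :=
  sub_nonpos.2 (infCrossEntropy_le_of_mem_closure hS hx hxS fun _ h => h)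

lemma divFrom_closure_eq (hS : ∀ q ∈ S, (∀ j, 0 < q j) ∧ ∑ j, q j = 1) (hne : S.Nonempty)
    (hx : x ∈ simplex ι) : divFrom (closure S) x = (divergence S x : EReal) := by
  have := hne.to_subtype
  refine le_antisymm (EReal.le_of_forall_lt_iff_le.1 fun z hz => ?_) (le_iInf₂ fun q hq => ?_)
  · rw [EReal.coe_lt_coe_iff, divergence, sub_lt_iff_lt_add] at hz
    obtain ⟨q, hq⟩ := exists_lt_of_ciInf_lt hz
    calc divFrom (closure S) x ≤ KL x q := iInf₂_le _ (subset_closure q.2)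
      _ = ((crossEntropy x q - entropy x : ℝ) : EReal) :=
        KL_eq_crossEntropy_sub_entropy fun i h => absurd h ((hS q q.2).1 i).ne'
      _ ≤ z := EReal.coe_le_coe_iff.2 (by linarith)
  · by_cases hsupp : ∀ i, q i = 0 → x i = 0
    · rw [KL_eq_crossEntropy_sub_entropy hsupp, EReal.coe_le_coe_iff, divergence]
      linarith [infCrossEntropy_le_of_mem_closure hS hx hq hsupp]
    · rw [KL, if_neg hsupp]
      exact le_top

lemma exists_isMaxOn_divergence (hS : ∀ q ∈ S, (∀ j, 0 < q j) ∧ ∑ j, q j = 1)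
    (hne : S.Nonempty) : ∃ x ∈ simplex ι, IsMaxOn (divergence S) (simplex ι) x := by
  obtain ⟨q₀, hq₀⟩ := hne
  have husc : UpperSemicontinuousOn (infCrossEntropy S) (simplex ι) :=
    upperSemicontinuousOn_ciInf (fun x hx => bddBelow_crossEntropy hS hx)
      fun q => (continuous_crossEntropy_left (q : ι → ℝ)).continuousOn.upperSemicontinuousOn
  have : UpperSemicontinuousOn (divergence S) (simplex ι) := by
    convert husc.add continuous_entropy.neg.continuousOn.upperSemicontinuousOn using 1
    · rfl
    · exact funext fun x => sub_eq_add_neg (infCrossEntropy S x) (entropy x)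
  exact this.exists_isMaxOn ⟨q₀, fun j => ((hS q₀ hq₀).1 j).le, (hS q₀ hq₀).2⟩
    (isCompact_stdSimplex ℝ ι)

end InfCrossEntropy

section HyperplaneModel

variable {ι : Type*} [Fintype ι]

noncomputable def softmax (v : ι → ℝ) : ι → ℝ := fun j => exp (v j) / ∑ l, exp (v l)

lemma sum_exp_pos [Nonempty ι] (v : ι → ℝ) : 0 < ∑ l, exp (v l) :=
  sum_pos (fun _ _ => exp_pos _) univ_nonempty

lemma softmax_pos [Nonempty ι] (v : ι → ℝ) (j : ι) : 0 < softmax v j :=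
  div_pos (exp_pos _) (sum_exp_pos v)

lemma sum_softmax [Nonempty ι] (v : ι → ℝ) : ∑ j, softmax v j = 1 := by
  simp only [softmax, ← sum_div]
  exact div_self (sum_exp_pos v).ne'

lemma log_softmax [Nonempty ι] (v : ι → ℝ) (j : ι) :
    log (softmax v j) = v j - log (∑ l, exp (v l)) := by
  rw [softmax, log_div (exp_ne_zero _) (sum_exp_pos v).ne', log_exp]

lemma softmax_log {y : ι → ℝ} (hy : ∀ j, 0 < y j) (hy1 : ∑ j, y j = 1) :
    softmax (fun j => log (y j)) = y := by
  funext j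
  simp [softmax, exp_log (hy _), hy1]

def hyperplaneModel (c : ι → ℝ) : Set (ι → ℝ) := softmax '' {v | c ⬝ᵥ v = 0}

variable {c x : ι → ℝ}

lemma hyperplaneModel_nonempty : (hyperplaneModel c).Nonempty :=
  ⟨_, 0, dotProduct_zero c, rfl⟩

lemma pos_and_sum_eq_one_of_mem_hyperplaneModel [Nonempty ι] :
    ∀ q ∈ hyperplaneModel c, (∀ j, 0 < q j) ∧ ∑ j, q j = 1 := by
  rintro _ ⟨v, -, rfl⟩
  exact ⟨softmax_pos v, sum_softmax v⟩

lemma mem_hyperplaneModel {y : ι → ℝ} (hy : ∀ j, 0 < y j) (hy1 : ∑ j, y j = 1)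
    (hcrit : c ⬝ᵥ (fun j => log (y j)) = 0) : y ∈ hyperplaneModel c :=
  ⟨_, hcrit, softmax_log hy hy1⟩

lemma sum_add_smul_eq_one (hx : ∑ j, x j = 1) (hc : ∑ j, c j = 0) (s : ℝ) :
    ∑ j, (x + s • c) j = 1 := by
  simp [sum_add_distrib, ← mul_sum, hx, hc]

lemma crossEntropy_softmax_eq_zero [Nonempty ι] (hc : ∑ j, c j = 0) {v : ι → ℝ}
    (hv : c ⬝ᵥ v = 0) : crossEntropy c (softmax v) = 0 := by
  simp only [crossEntropy, log_softmax, mul_sub, sum_sub_distrib, ← sum_mul, hc, zero_mul,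
    sub_zero, neg_eq_zero]
  exact hv

lemma infCrossEntropy_add_smul [Nonempty ι] (hc : ∑ j, c j = 0) (x : ι → ℝ) (s : ℝ) :
    infCrossEntropy (hyperplaneModel c) (x + s • c) = infCrossEntropy (hyperplaneModel c) x := by
  refine iInf_congr fun ⟨q, hq⟩ => ?_
  obtain ⟨v, hv, rfl⟩ := hq
  rw [crossEntropy_add_smul, crossEntropy_softmax_eq_zero hc hv, mul_zero, add_zero]

lemma entropy_le_infCrossEntropy_of_add_smul_mem [Nonempty ι] (hc : ∑ j, c j = 0) {s : ℝ}
    (hy : x + s • c ∈ simplex ι) :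
    entropy (x + s • c) ≤ infCrossEntropy (hyperplaneModel c) x := by
  rw [← infCrossEntropy_add_smul hc x s]
  exact entropy_le_infCrossEntropy pos_and_sum_eq_one_of_mem_hyperplaneModel
    hyperplaneModel_nonempty hy

lemma crossEntropy_eq_entropy_of_dotProduct_log_eq_zero {s : ℝ}
    (hcrit : c ⬝ᵥ (fun j => log ((x + s • c) j)) = 0) :
    crossEntropy x (x + s • c) = entropy (x + s • c) := by
  have : crossEntropy c (x + s • c) = 0 := by
    rw [crossEntropy, neg_eq_zero]
    exact hcrit
  rw [entropy, crossEntropy_add_smul, this, mul_zero, add_zero]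

lemma divergence_eq_of_dotProduct_log_eq_zero [Nonempty ι] (hc : ∑ j, c j = 0)
    (hx : ∑ j, x j = 1) {s : ℝ} (hy : ∀ j, 0 < (x + s • c) j)
    (hcrit : c ⬝ᵥ (fun j => log ((x + s • c) j)) = 0) :
    divergence (hyperplaneModel c) x = crossEntropy x (x + s • c) - entropy x := by
  have hy1 := sum_add_smul_eq_one hx hc s
  have hymem : x + s • c ∈ simplex ι := ⟨fun j => (hy j).le, hy1⟩
  rw [divergence, crossEntropy_eq_entropy_of_dotProduct_log_eq_zero hcrit]
  refine congrArg (· - entropy x)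
    (le_antisymm ?_ (entropy_le_infCrossEntropy_of_add_smul_mem hc hymem))
  rw [← infCrossEntropy_add_smul hc x s]
  exact infCrossEntropy_le pos_and_sum_eq_one_of_mem_hyperplaneModel hymem
    (mem_hyperplaneModel hy hy1 hcrit)

end HyperplaneModel

section CriticalPoint

lemma not_exists_pos_and_neg_nonpos {ι : Type*} {c x : ι → ℝ} (hx : ∀ i, 0 ≤ x i)
    (hnd : ¬((∃ i, 0 < c i ∧ x i = 0) ∧ ∃ j, c j < 0 ∧ x j = 0)) (s : ℝ) :
    ¬((∃ i, 0 < c i ∧ x i + s * c i ≤ 0) ∧ ∃ j, c j < 0 ∧ x j + s * c j ≤ 0) := by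
  rintro ⟨⟨i, hci, hi⟩, ⟨j, hcj, hj⟩⟩
  have hs : s = 0 := by
    rcases le_total s 0 with hs | hs
    · nlinarith [hx j]
    · nlinarith [hx i]
  subst hs
  simp only [zero_mul, add_zero] at hi hj
  exact hnd ⟨⟨i, hci, le_antisymm hi (hx i)⟩, ⟨j, hcj, le_antisymm hj (hx j)⟩⟩

variable {ι : Type*} [Fintype ι] {c x : ι → ℝ}

lemma prod_max_rpow_eq_zero_iff (y e : ι → ℝ) :
    ∏ j, max (y j) 0 ^ e j = 0 ↔ ∃ j, y j ≤ 0 ∧ e j ≠ 0 := by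
  simp only [prod_eq_zero_iff, mem_univ, true_and, rpow_eq_zero_iff_of_nonneg (le_max_right _ _),
    max_eq_right_iff]

lemma log_prod_max_rpow {y : ι → ℝ} (hy : ∀ j, 0 < y j) (e : ι → ℝ) :
    log (∏ j, max (y j) 0 ^ e j) = ∑ j, e j * log (y j) := by
  rw [log_prod fun j _ => (rpow_pos_of_pos (lt_max_of_lt_left (hy j)) _).ne']
  exact sum_congr rfl fun j _ => by rw [max_eq_left (hy j).le, log_rpow (hy j)]

lemma exists_prod_max_rpow_eq (hx : ∀ i, 0 ≤ x i) {i₀ j₀ : ι} (hi₀ : 0 < c i₀)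
    (hj₀ : c j₀ < 0) :
    ∃ s : ℝ, ∏ j, max ((x + s • c) j) 0 ^ max (c j) 0 =
      ∏ j, max ((x + s • c) j) 0 ^ max (-c j) 0 := by
  set E : (ι → ℝ) → ℝ → ℝ := fun e s => ∏ j, max ((x + s • c) j) 0 ^ e j
  have hcont : ∀ e : ι → ℝ, (∀ j, 0 ≤ e j) → Continuous (E e) := fun e he =>
    continuous_finsetProd _ fun j _ => (continuous_rpow_const (he j)).comp (by fun_prop)
  have hnonneg : ∀ e s, 0 ≤ E e s := fun e s =>
    prod_nonneg fun j _ => rpow_nonneg (le_max_right _ _) _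
  have hleft : E (fun j => max (c j) 0) (-(x i₀ / c i₀)) = 0 :=
    (prod_max_rpow_eq_zero_iff _ _).2 ⟨i₀, by simp [div_mul_cancel₀ _ hi₀.ne'],
      (lt_max_of_lt_left hi₀).ne'⟩
  have hright : E (fun j => max (-c j) 0) (x j₀ / -c j₀) = 0 :=
    (prod_max_rpow_eq_zero_iff _ _).2 ⟨j₀, by simp [div_neg, div_mul_cancel₀ _ hj₀.ne],
      (lt_max_of_lt_left (neg_pos.2 hj₀)).ne'⟩
  have hle : -(x i₀ / c i₀) ≤ x j₀ / -c j₀ :=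
    (neg_nonpos.2 (div_nonneg (hx i₀) hi₀.le)).trans (div_nonneg (hx j₀) (neg_nonneg.2 hj₀.le))
  obtain ⟨s, -, hs⟩ := intermediate_value_Icc
    (f := fun s => E (fun j => max (c j) 0) s - E (fun j => max (-c j) 0) s) hle
    ((hcont _ fun j => le_max_right _ _).sub (hcont _ fun j => le_max_right _ _)).continuousOn
    (show (0 : ℝ) ∈ Set.Icc _ _ from
      ⟨by simp only [hleft, zero_sub, neg_nonpos]; exact hnonneg _ _,
        by simp only [hright, sub_zero]; exact hnonneg _ _⟩)
  exact ⟨s, sub_eq_zero.1 hs⟩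

lemma pos_of_prod_max_rpow_eq (hc : ∀ i, c i ≠ 0) (hx : ∀ i, 0 ≤ x i)
    (hnd : ¬((∃ i, 0 < c i ∧ x i = 0) ∧ ∃ j, c j < 0 ∧ x j = 0)) {s : ℝ}
    (h : ∏ j, max ((x + s • c) j) 0 ^ max (c j) 0 = ∏ j, max ((x + s • c) j) 0 ^ max (-c j) 0)
    (j : ι) : 0 < (x + s • c) j := by
  have hzero : ∀ e : ι → ℝ, ∏ j, max ((x + s • c) j) 0 ^ max (e j) 0 = 0 ↔
      ∃ i, 0 < e i ∧ x i + s * c i ≤ 0 := fun e => by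
    rw [prod_max_rpow_eq_zero_iff]
    simp only [ne_eq, max_eq_right_iff, not_le, Pi.add_apply, Pi.smul_apply, smul_eq_mul]
    exact exists_congr fun i => and_comm
  have hP0 := hzero c
  have hQ0 : ∏ j, max ((x + s • c) j) 0 ^ max (-c j) 0 = 0 ↔
      ∃ i, c i < 0 ∧ x i + s * c i ≤ 0 := by
    simpa only [neg_pos] using hzero fun i => -c i
  by_contra! hj
  refine not_exists_pos_and_neg_nonpos hx hnd s ?_
  rcases (hc j).lt_or_gt with hcj | hcj
  · have hQ := hQ0.2 ⟨j, hcj, hj⟩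
    exact ⟨hP0.1 (h.trans hQ), hQ0.1 hQ⟩
  · have hP := hP0.2 ⟨j, hcj, hj⟩
    exact ⟨hP0.1 hP, hQ0.1 (h.symm.trans hP)⟩

lemma exists_pos_dotProduct_log_eq_zero (hc : ∀ i, c i ≠ 0) (hx : ∀ i, 0 ≤ x i) {i₀ j₀ : ι}
    (hi₀ : 0 < c i₀) (hj₀ : c j₀ < 0)
    (hnd : ¬((∃ i, 0 < c i ∧ x i = 0) ∧ ∃ j, c j < 0 ∧ x j = 0)) :
    ∃ s : ℝ, (∀ j, 0 < (x + s • c) j) ∧ c ⬝ᵥ (fun j => log ((x + s • c) j)) = 0 := by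
  -- `c ⬝ᵥ log y = 0` says `∏ y ^ c⁺ = ∏ y ^ c⁻`; unlike the logarithms, both products stay
  -- continuous up to the boundary, where one of them vanishes
  obtain ⟨s, hs⟩ := exists_prod_max_rpow_eq hx hi₀ hj₀
  have hpos := pos_of_prod_max_rpow_eq hc hx hnd hs
  refine ⟨s, hpos, ?_⟩
  have hbalance := congrArg log hs
  rw [log_prod_max_rpow hpos, log_prod_max_rpow hpos, ← sub_eq_zero, ← sum_sub_distrib] at hbalance
  simpa only [dotProduct, ← sub_mul, max_zero_sub_max_neg_zero_eq_self] using hbalance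

end CriticalPoint

lemma mem_closure_of_forall_abs_sub_le {κ : Type*} {S : Set (κ → ℝ)} {x C : κ → ℝ}
    (h : ∀ t : ℝ, 0 < t → t ≤ 1 → ∃ y ∈ S, ∀ k, |y k - x k| ≤ t * C k) : x ∈ closure S := by
  choose y hyS hyx using fun m : ℕ => h (1 / (m + 1)) (by positivity)
    ((div_le_one (by positivity)).2 (by simp))
  refine mem_closure_of_tendsto (f := y) (b := atTop) (tendsto_pi_nhds.2 fun k => ?_)
    (Eventually.of_forall hyS)
  have h0 : Tendsto (fun m : ℕ => 1 / ((m : ℝ) + 1) * C k) atTop (𝓝 0) := by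
    simpa using tendsto_one_div_add_atTop_nhds_zero_nat.mul_const (C k)
  exact tendsto_sub_nhds_zero_iff.1 (squeeze_zero_norm (fun m => hyx m k) h0)

section Maximizers

variable {ι : Type*} [Fintype ι] {c x : ι → ℝ}

lemma mem_closure_hyperplaneModel [Nonempty ι] (hc : ∀ i, c i ≠ 0) (hsum : ∑ j, c j = 0)
    (hx : x ∈ simplex ι) {i₀ j₀ : ι} (hi₀ : 0 < c i₀) (hxi₀ : x i₀ = 0) (hj₀ : c j₀ < 0)
    (hxj₀ : x j₀ = 0) : x ∈ closure (hyperplaneModel c) := by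
  -- the model points on the fibres through the interior points `x + t • (u - x)` tend to `x`
  set u : ι → ℝ := softmax 0
  have hu : ∀ j, 0 < u j := softmax_pos 0
  set K := u i₀ / c i₀ + u j₀ / -c j₀
  refine mem_closure_of_forall_abs_sub_le (C := fun k => |u k - x k| + K * |c k|)
    fun t ht ht1 => ?_
  set z := x + t • (u - x)
  have hz : ∀ j, 0 < z j := fun j => by
    simp only [z, Pi.add_apply, Pi.smul_apply, Pi.sub_apply, smul_eq_mul]
    nlinarith [hx.1 j, hu j]
  have hz1 : ∑ j, z j = 1 := by
    simp [z, sum_add_distrib, ← mul_sum, sum_sub_distrib, hx.2, u, sum_softmax]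
  obtain ⟨s, hy, hcrit⟩ := exists_pos_dotProduct_log_eq_zero hc (fun j => (hz j).le) hi₀ hj₀
    fun h => by obtain ⟨i, -, hi⟩ := h.1; exact (hz i).ne' hi
  have hlo : -(t * (u i₀ / c i₀)) < s := by
    have := hy i₀
    simp only [z, Pi.add_apply, Pi.smul_apply, Pi.sub_apply, smul_eq_mul, hxi₀] at this
    rw [mul_div_assoc', neg_lt, lt_div_iff₀ hi₀]
    linarith
  have hhi : s < t * (u j₀ / -c j₀) := by
    have := hy j₀
    simp only [z, Pi.add_apply, Pi.smul_apply, Pi.sub_apply, smul_eq_mul, hxj₀] at this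
    rw [mul_div_assoc', lt_div_iff₀ (neg_pos.2 hj₀)]
    linarith
  have hs : |s| ≤ t * K := by
    have ha := mul_nonneg ht.le (div_pos (hu i₀) hi₀).le
    have hb := mul_nonneg ht.le (div_pos (hu j₀) (neg_pos.2 hj₀)).le
    have htK : t * K = t * (u i₀ / c i₀) + t * (u j₀ / -c j₀) := mul_add _ _ _
    exact abs_le.2 ⟨by linarith, by linarith⟩
  refine ⟨z + s • c, mem_hyperplaneModel hy (sum_add_smul_eq_one hz1 hsum s) hcrit, fun k => ?_⟩
  calc |(z + s • c) k - x k| = |t * (u k - x k) + s * c k| := by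
        simp only [z, Pi.add_apply, Pi.smul_apply, Pi.sub_apply, smul_eq_mul]
        ring_nf
    _ ≤ t * |u k - x k| + |s| * |c k| := by
        simpa [abs_mul, abs_of_pos ht] using abs_add_le (t * (u k - x k)) (s * c k)
    _ ≤ t * (|u k - x k| + K * |c k|) := by nlinarith [abs_nonneg (c k)]

noncomputable def normalizedPosPart (c : ι → ℝ) : ι → ℝ :=
  fun i => max (c i) 0 / ∑ j, max (c j) 0

lemma sum_max_zero_pos {i₀ : ι} (hi₀ : 0 < c i₀) : 0 < ∑ j, max (c j) 0 :=
  sum_pos' (fun _ _ => le_max_right _ _) ⟨i₀, mem_univ _, lt_max_of_lt_left hi₀⟩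

lemma normalizedPosPart_mem_simplex {i₀ : ι} (hi₀ : 0 < c i₀) :
    normalizedPosPart c ∈ simplex ι := by
  refine ⟨fun i => div_nonneg (le_max_right _ _) (sum_max_zero_pos hi₀).le, ?_⟩
  simp only [normalizedPosPart, ← sum_div]
  exact div_self (sum_max_zero_pos hi₀).ne'

lemma normalizedPosPart_eq_zero_iff {i₀ : ι} (hi₀ : 0 < c i₀) (i : ι) :
    normalizedPosPart c i = 0 ↔ c i ≤ 0 := by
  simp [normalizedPosPart, (sum_max_zero_pos hi₀).ne']

lemma eq_normalizedPosPart_of_eq_mul (hx : ∑ j, x j = 1) {γ : ℝ}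
    (h : ∀ k, x k = γ * max (c k) 0) : x = normalizedPosPart c := by
  have hγ : γ * ∑ j, max (c j) 0 = 1 := by
    rw [mul_sum, ← hx]
    exact sum_congr rfl fun k _ => (h k).symm
  funext k
  rw [normalizedPosPart, h k, eq_div_iff (right_ne_zero_of_mul_eq_one hγ)]
  linear_combination max (c k) 0 * hγ

lemma divergence_normalizedPosPart_pos [Nonempty ι] (hc : ∀ i, c i ≠ 0) (hsum : ∑ j, c j = 0)
    {i₀ j₀ : ι} (hi₀ : 0 < c i₀) (hj₀ : c j₀ < 0) :
    0 < divergence (hyperplaneModel c) (normalizedPosPart c) := by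
  set p := normalizedPosPart c
  have hp := normalizedPosPart_mem_simplex hi₀
  obtain ⟨s, hy, hcrit⟩ := exists_pos_dotProduct_log_eq_zero hc hp.1 hi₀ hj₀
    fun ⟨⟨i, hi, hpi⟩, _⟩ => ((normalizedPosPart_eq_zero_iff hi₀ i).1 hpi).not_gt hi
  rw [divergence_eq_of_dotProduct_log_eq_zero hsum hp.2 hy hcrit]
  have hgibbs := sum_sub_sum_support_le_crossEntropy_sub_entropy hp.1 hy
  -- strict Gibbs: `p` vanishes at `j₀` while the model point does not
  have hlt : ∑ j with p j ≠ 0, (p + s • c) j < ∑ j, (p + s • c) j :=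
    sum_lt_sum_of_subset (filter_subset _ _) (mem_univ j₀)
      (by simp [p, (normalizedPosPart_eq_zero_iff hi₀ j₀).2 hj₀.le]) (hy j₀)
      fun j _ _ => (hy j).le
  rw [sum_add_smul_eq_one hp.2 hsum] at hlt
  rw [hp.2] at hgibbs
  linarith

lemma eventually_add_smul_mem_simplex {z w : ι → ℝ} (hz : z ∈ simplex ι) (hw : ∑ k, w k = 0)
    (hsupp : ∀ k, w k ≠ 0 → 0 < z k) : ∀ᶠ t in 𝓝 (0 : ℝ), z + t • w ∈ simplex ι := by
  have hnonneg : ∀ k, ∀ᶠ t in 𝓝 (0 : ℝ), 0 ≤ z k + t * w k := by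
    intro k
    by_cases hwk : w k = 0
    · simp [hwk, hz.1 k]
    · have hline : Tendsto (fun t : ℝ => z k + t * w k) (𝓝 0) (𝓝 (z k)) := by
        have : Continuous fun t : ℝ => z k + t * w k := by fun_prop
        simpa using this.tendsto 0
      exact (hline.eventually (lt_mem_nhds (hsupp k hwk))).mono fun t ht => ht.le
  filter_upwards [eventually_all.2 hnonneg] with t ht
  exact ⟨ht, by simp [sum_add_distrib, ← mul_sum, hz.2, hw]⟩

lemma div_eq_div_of_isMaxOn [Nonempty ι] (hsum : ∑ j, c j = 0) (hx : x ∈ simplex ι)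
    (hmax : IsMaxOn (divergence (hyperplaneModel c)) (simplex ι) x) {s : ℝ}
    (hy : ∀ j, 0 < (x + s • c) j) (hcrit : c ⬝ᵥ (fun j => log ((x + s • c) j)) = 0)
    {i j : ι} (hi : x i ≠ 0) (hj : x j ≠ 0) : x i / (x + s • c) i = x j / (x + s • c) j := by
  set y := x + s • c with hy_def
  -- shifting mass from `j` to `i` in both `x` and `y` keeps `y` on the fibre of `x`,
  -- so the entropy gap `H y - H x` is locally maximal at `x`
  set w : ι → ℝ := Pi.single i 1 - Pi.single j 1
  have hw : ∀ a : ι → ℝ, ∑ k, w k * a k = a i - a j := fun a => by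
    simp [w, sub_mul, sum_sub_distrib, Pi.single_apply]
  have hw0 : ∑ k, w k = 0 := by simpa using hw 1
  have hxi := (hx.1 i).lt_of_ne' hi
  have hxj := (hx.1 j).lt_of_ne' hj
  have hxw : ∀ k, w k ≠ 0 → 0 < x k := fun k hk => by
    by_cases hki : k = i
    · exact hki ▸ hxi
    by_cases hkj : k = j
    · exact hkj ▸ hxj
    simp [w, hki, hkj] at hk
  have hymem : y ∈ simplex ι := ⟨fun k => (hy k).le, sum_add_smul_eq_one hx.2 hsum s⟩
  have hloc : IsLocalMax (fun t : ℝ => entropy (y + t • w) - entropy (x + t • w)) 0 := by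
    filter_upwards [eventually_add_smul_mem_simplex hx hw0 hxw,
      eventually_add_smul_mem_simplex hymem hw0 fun k _ => hy k] with t hxt hyt
    have hfib : y + t • w = x + t • w + s • c := by rw [hy_def]; abel
    rw [hfib] at hyt ⊢
    calc entropy (x + t • w + s • c) - entropy (x + t • w)
        ≤ divergence (hyperplaneModel c) (x + t • w) :=
          sub_le_sub_right (entropy_le_infCrossEntropy_of_add_smul_mem hsum hyt) _
      _ ≤ divergence (hyperplaneModel c) x := hmax hxt
      _ = _ := by
          rw [divergence_eq_of_dotProduct_log_eq_zero hsum hx.2 hy hcrit,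
            crossEntropy_eq_entropy_of_dotProduct_log_eq_zero hcrit]
          simp [y]
  have hderiv := (hasDerivAt_entropy_add_smul (z := y) (w := w) fun k _ => (hy k).ne').sub
    (hasDerivAt_entropy_add_smul fun k hk => (hxw k hk).ne')
  have hcrit' := hloc.hasDerivAt_eq_zero hderiv
  rw [hw, hw] at hcrit'
  rw [div_eq_div_iff (hy i).ne' (hy j).ne']
  refine log_injOn_pos (mul_pos hxi (hy j)) (mul_pos hxj (hy i)) ?_
  rw [log_mul hxi.ne' (hy j).ne', log_mul hxj.ne' (hy i).ne']
  linarith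

lemma eq_normalizedPosPart_of_div_eq (hx : x ∈ simplex ι) {s : ℝ} (hy : ∀ k, 0 < (x + s • c) k)
    (hs : s < 0) {i₀ : ι} (hi₀ : 0 < c i₀)
    (hprop : ∀ i j, x i ≠ 0 → x j ≠ 0 → x i / (x + s • c) i = x j / (x + s • c) j) :
    x = normalizedPosPart c := by
  -- on the support `x = β • y` with `β > 1`, off it `0 < y = s • c`; hence `x ∝ c` exactly
  -- where `c > 0`
  have hyk : ∀ k, (x + s • c) k = x k + s * c k := fun k => rfl
  have hoff : ∀ k, x k = 0 → c k < 0 := fun k hk => by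
    have := hy k
    rw [hyk, hk, zero_add] at this
    nlinarith
  have hxi₀ : x i₀ ≠ 0 := fun h => (hoff i₀ h).not_gt hi₀
  set β := x i₀ / (x + s • c) i₀
  have hβ : ∀ k, x k ≠ 0 → x k = β * (x k + s * c k) := fun k hk =>
    (div_eq_iff (hy k).ne').1 (hprop k i₀ hk hxi₀)
  have hβ1 : 1 < β := by
    refine (one_lt_div (hy i₀)).2 ?_
    rw [hyk]
    nlinarith
  set γ := β * s / (1 - β)
  have hγ : 0 < γ := div_pos_of_neg_of_neg (mul_neg_of_pos_of_neg (by linarith) hs)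
    (by linarith)
  have hon : ∀ k, x k ≠ 0 → x k = γ * c k := fun k hk => by
    rw [div_mul_eq_mul_div, eq_div_iff (by linarith)]
    linear_combination hβ k hk
  refine eq_normalizedPosPart_of_eq_mul hx.2 (γ := γ) fun k => ?_
  by_cases hk : x k = 0
  · rw [hk, max_eq_right (hoff k hk).le, mul_zero]
  · have hck : 0 < c k := by
      have hxk := (hx.1 k).lt_of_ne' hk
      rw [hon k hk] at hxk
      exact pos_of_mul_pos_right hxk hγ.le
    rw [max_eq_left hck.le]
    exact hon k hk

theorem eq_normalizedPosPart_or_of_isMaxOn [Nonempty ι] (hc : ∀ i, c i ≠ 0)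
    (hsum : ∑ j, c j = 0) {i₀ j₀ : ι} (hi₀ : 0 < c i₀) (hj₀ : c j₀ < 0) (hx : x ∈ simplex ι)
    (hmax : IsMaxOn (divergence (hyperplaneModel c)) (simplex ι) x) :
    x = normalizedPosPart c ∨ x = normalizedPosPart (-c) := by
  have hpos : 0 < divergence (hyperplaneModel c) x :=
    (divergence_normalizedPosPart_pos hc hsum hi₀ hj₀).trans_le
      (hmax (normalizedPosPart_mem_simplex hi₀))
  obtain ⟨s, hy, hcrit⟩ := exists_pos_dotProduct_log_eq_zero hc hx.1 hi₀ hj₀ <| by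
    rintro ⟨⟨i, hi, hxi⟩, ⟨j, hj, hxj⟩⟩
    exact (divergence_le_zero_of_mem_closure pos_and_sum_eq_one_of_mem_hyperplaneModel hx
      (mem_closure_hyperplaneModel hc hsum hx hi hxi hj hxj)).not_gt hpos
  have hprop := fun i j => div_eq_div_of_isMaxOn hsum hx hmax hy hcrit (i := i) (j := j)
  rcases lt_trichotomy s 0 with hs | rfl | hs
  · exact Or.inl (eq_normalizedPosPart_of_div_eq hx hy hs hi₀ hprop)
  · rw [divergence_eq_of_dotProduct_log_eq_zero hsum hx.2 hy hcrit] at hpos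
    simp [entropy] at hpos
  · have hneg : x + s • c = x + (-s) • (-c) := by rw [neg_smul_neg]
    rw [hneg] at hy hprop
    exact Or.inr (eq_normalizedPosPart_of_div_eq hx hy (neg_neg_of_pos hs) (neg_pos.2 hj₀) hprop)

end Maximizers

lemma range_vecMul_eq_of_ker_mulVecLin_eq_span {K κ ι : Type*} [Field K] [Fintype κ] [Fintype ι]
    [DecidableEq κ] [DecidableEq ι] (B : Matrix κ ι K) (c : ι → K)
    (h : LinearMap.ker B.mulVecLin = K ∙ c) :
    Set.range (fun θ => θ ᵥ* B) = {v | c ⬝ᵥ v = 0} := by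
  have hdual : ∀ θ, B.mulVecLin.dualMap (dotProductEquiv K κ θ) = dotProductEquiv K ι (θ ᵥ* B) :=
    fun θ => LinearMap.ext fun w => dotProduct_mulVec θ B w
  ext v
  constructor
  · rintro ⟨θ, rfl⟩
    have hc : c ∈ LinearMap.ker B.mulVecLin := h ▸ Submodule.mem_span_singleton_self c
    rw [LinearMap.mem_ker, mulVecLin_apply] at hc
    rw [Set.mem_ofPred_eq, dotProduct_comm, ← dotProduct_mulVec, hc, dotProduct_zero]
  · intro hv
    have : dotProductEquiv K ι v ∈ (LinearMap.ker B.mulVecLin).dualAnnihilator := by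
      rw [h, Submodule.mem_dualAnnihilator]
      intro w hw
      obtain ⟨a, rfl⟩ := Submodule.mem_span_singleton.1 hw
      simp [dotProduct_comm v c, show c ⬝ᵥ v = 0 from hv]
    rw [← LinearMap.range_dualMap_eq_dualAnnihilator_ker] at this
    obtain ⟨φ, hφ⟩ := this
    refine ⟨(dotProductEquiv K κ).symm φ, (dotProductEquiv K ι).injective ?_⟩
    rw [← hdual, LinearEquiv.apply_symm_apply, hφ]

lemma EA_eq_hyperplaneModel {κ ι : Type*} [Fintype κ] [Fintype ι] [DecidableEq κ]
    [DecidableEq ι] (A : Matrix κ ι ℕ) (c : ι → ℝ)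
    (hker : LinearMap.ker (A.map (Nat.cast : ℕ → ℝ)).mulVecLin = ℝ ∙ c) :
    EA A = hyperplaneModel c := by
  rw [hyperplaneModel, ← range_vecMul_eq_of_ker_mulVecLin_eq_span _ c hker, ← Set.range_comp]
  ext p
  simp [EA, softmax, vecMul, dotProduct, funext_iff, eq_comm]

lemma sum_eq_zero_of_ker_mulVecLin_eq_span {κ ι : Type*} [Fintype κ] [Fintype ι] [DecidableEq κ]
    [DecidableEq ι] (A : Matrix κ ι ℕ) (c : ι → ℝ)
    (hone : ∃ cc : κ → ℝ, ∀ j, ∑ i, cc i * (A i j : ℝ) = 1)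
    (hker : LinearMap.ker (A.map (Nat.cast : ℕ → ℝ)).mulVecLin = ℝ ∙ c) :
    ∑ j, c j = 0 := by
  obtain ⟨cc, hcc⟩ := hone
  have h1 : (fun _ => 1 : ι → ℝ) ∈ {v | c ⬝ᵥ v = 0} :=
    range_vecMul_eq_of_ker_mulVecLin_eq_span _ c hker ▸ ⟨cc, funext hcc⟩
  simpa [dotProduct] using h1

lemma normalizedPosPart_eq_ite {ι : Type*} [Fintype ι] {c : ι → ℝ} {P : ι → Prop}
    [DecidablePred P] (hpos : ∀ i, P i → 0 < c i) (hneg : ∀ i, ¬P i → c i < 0) :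
    normalizedPosPart c = fun i => if P i then c i / ∑ j, (if P j then c j else 0) else 0 := by
  have hmax : ∀ i, max (c i) 0 = if P i then c i else 0 := fun i => by
    split_ifs with h
    exacts [max_eq_left (hpos i h).le, max_eq_right (hneg i h).le]
  funext i
  simp only [normalizedPosPart, hmax]
  split_ifs <;> simp

lemma normalizedPosPart_neg_eq_ite {ι : Type*} [Fintype ι] {c : ι → ℝ} {P : ι → Prop}
    [DecidablePred P] (hpos : ∀ i, P i → 0 < c i) (hneg : ∀ i, ¬P i → c i < 0) :
    normalizedPosPart (-c) = fun i => if P i then 0 else -c i / ∑ j, (if P j then 0 else -c j) := by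
  rw [normalizedPosPart_eq_ite (c := -c) (P := fun i => ¬P i) (fun i h => neg_pos.2 (hneg i h))
    fun i h => neg_neg_of_pos (hpos i (not_not.1 h))]
  simp only [ite_not, Pi.neg_apply]

lemma isMaxOn_iff_of_eqOn_coe {α : Type*} {s : Set α} {F : α → EReal} {D : α → ℝ}
    (h : ∀ x ∈ s, F x = D x) {x : α} (hx : x ∈ s) : IsMaxOn F s x ↔ IsMaxOn D s x := by
  simp only [isMaxOn_iff]
  exact forall₂_congr fun y hy => by rw [h y hy, h x hx, EReal.coe_le_coe_iff]

lemma biSup_eq_max_and_eq_or_eq_of_isMaxOn {α β : Type*} [CompleteLinearOrder β] {s : Set α}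
    {F : α → β} {a b : α} (ha : a ∈ s) (hb : b ∈ s) (hex : ∃ x ∈ s, IsMaxOn F s x)
    (hmax : ∀ x ∈ s, IsMaxOn F s x → x = a ∨ x = b) :
    (⨆ x ∈ s, F x) = max (F a) (F b) ∧ ∀ x ∈ s, (∀ y ∈ s, F y ≤ F x) → x = a ∨ x = b := by
  obtain ⟨x₀, hx₀, hF₀⟩ := hex
  refine ⟨le_antisymm (iSup₂_le fun x hx => (hF₀ hx).trans ?_) ?_,
    fun x hx hx' => hmax x hx (isMaxOn_iff.2 hx')⟩
  · rcases hmax x₀ hx₀ hF₀ with rfl | rfl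
    exacts [le_max_left _ _, le_max_right _ _]
  · exact max_le (le_iSup₂ (f := fun x _ => F x) a ha) (le_iSup₂ (f := fun x _ => F x) b hb)

theorem stmt7_general {d n r : ℕ} (hr : 0 < r) (hrn : r < n)
    (A : Matrix (Fin d) (Fin n) ℕ)
    (hone : ∃ cc : Fin d → ℝ, ∀ j, ∑ i, cc i * (A i j : ℝ) = 1)
    (c : Fin n → ℤ)
    (hker : LinearMap.ker (A.map (Nat.cast : ℕ → ℝ)).mulVecLin
      = Submodule.span ℝ {fun i => (c i : ℝ)})
    (hcpos : ∀ i : Fin n, (i : ℕ) < r → 0 < c i)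
    (hcneg : ∀ i : Fin n, r ≤ (i : ℕ) → c i < 0)
    (M : Set (Fin n → ℝ)) (hM : M = closure (EA A))
    (p ptil : Fin n → ℝ)
    (hp : ∀ i : Fin n, p i =
      if (i : ℕ) < r then (c i : ℝ) / (∑ j : Fin n, if j.val < r then (c j : ℝ) else 0) else 0)
    (hptil : ∀ i : Fin n, ptil i =
      if (i : ℕ) < r then 0 else (-(c i : ℝ)) / (∑ j : Fin n, if j.val < r then 0 else (-(c j : ℝ)))) :
    (⨆ x ∈ simplex (Fin n), divFrom M x) = max (divFrom M p) (divFrom M ptil) ∧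
    ∀ x ∈ simplex (Fin n), (∀ y ∈ simplex (Fin n), divFrom M y ≤ divFrom M x) →
      x = p ∨ x = ptil := by
  set c' : Fin n → ℝ := fun i => (c i : ℝ)
  have : Nonempty (Fin n) := ⟨⟨r, hrn⟩⟩
  have hpos : ∀ i : Fin n, (i : ℕ) < r → 0 < c' i := fun i h => Int.cast_pos.2 (hcpos i h)
  have hneg : ∀ i : Fin n, ¬(i : ℕ) < r → c' i < 0 := fun i h =>
    Int.cast_lt_zero.2 (hcneg i (not_lt.1 h))
  have hc : ∀ i, c' i ≠ 0 := fun i => by_cases (hpos i · |>.ne') (hneg i · |>.ne)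
  have hi₀ : 0 < c' ⟨0, hr.trans hrn⟩ := hpos _ hr
  have hj₀ : c' ⟨r, hrn⟩ < 0 := hneg _ (lt_irrefl r)
  have hpc : p = normalizedPosPart c' := by
    rw [normalizedPosPart_eq_ite hpos hneg]
    exact funext hp
  have hptc : ptil = normalizedPosPart (-c') := by
    rw [normalizedPosPart_neg_eq_ite hpos hneg]
    exact funext hptil
  have hD : ∀ x ∈ simplex (Fin n), divFrom M x = divergence (hyperplaneModel c') x := fun x hx => by
    rw [hM, EA_eq_hyperplaneModel A c' hker]
    exact divFrom_closure_eq pos_and_sum_eq_one_of_mem_hyperplaneModel hyperplaneModel_nonempty hx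
  refine biSup_eq_max_and_eq_or_eq_of_isMaxOn (hpc ▸ normalizedPosPart_mem_simplex hi₀)
    (hptc ▸ normalizedPosPart_mem_simplex (c := -c') (neg_pos.2 hj₀)) ?_ fun x hx hmax => ?_
  · obtain ⟨x₀, hx₀, hmax₀⟩ :=
      exists_isMaxOn_divergence (pos_and_sum_eq_one_of_mem_hyperplaneModel (c := c'))
        hyperplaneModel_nonempty
    exact ⟨x₀, hx₀, (isMaxOn_iff_of_eqOn_coe hD hx₀).2 hmax₀⟩
  · rw [hpc, hptc]
    exact eq_normalizedPosPart_or_of_isMaxOn hc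
      (sum_eq_zero_of_ker_mulVecLin_eq_span A c' hone hker) hi₀ hj₀ hx
      ((isMaxOn_iff_of_eqOn_coe hD hx).1 hmax)

/-- For a codimension-one toric model (rank `d = n−1`, kernel spanned by an
integer vector `c` positive on the first `r` coordinates and negative on the rest), the maximum
divergence is `max(D(p), D(p̃))` for the two normalized points `p, p̃` supported on the positive
resp. negative part of `c`, and every global maximizer equals `p` or `p̃`. -/
theorem stmt7 {d n r : ℕ} (hdn : d + 1 = n) (hr : 0 < r) (hrn : r < n)
    (A : Matrix (Fin d) (Fin n) ℕ)
    (hrank : (A.map (Nat.cast : ℕ → ℝ)).rank = d)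
    (hone : ∃ cc : Fin d → ℝ, ∀ j, ∑ i, cc i * (A i j : ℝ) = 1)
    (c : Fin n → ℤ)
    (hker : LinearMap.ker (A.map (Nat.cast : ℕ → ℝ)).mulVecLin
      = Submodule.span ℝ {fun i => (c i : ℝ)})
    (hcpos : ∀ i : Fin n, (i : ℕ) < r → 0 < c i)
    (hcneg : ∀ i : Fin n, r ≤ (i : ℕ) → c i < 0)
    (M : Set (Fin n → ℝ)) (hM : M = closure (EA A))
    (p ptil : Fin n → ℝ)
    (hp : ∀ i : Fin n, p i =
      if (i : ℕ) < r then (c i : ℝ) / (∑ j : Fin n, if j.val < r then (c j : ℝ) else 0) else 0)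
    (hptil : ∀ i : Fin n, ptil i =
      if (i : ℕ) < r then 0 else (-(c i : ℝ)) / (∑ j : Fin n, if j.val < r then 0 else (-(c j : ℝ)))) :
    (⨆ x ∈ simplex (Fin n), divFrom M x) = max (divFrom M p) (divFrom M ptil) ∧
    ∀ x ∈ simplex (Fin n), (∀ y ∈ simplex (Fin n), divFrom M y ≤ divFrom M x) →
      x = p ∨ x = ptil :=
  stmt7_general hr hrn A hone c hker hcpos hcneg M hM p ptil hp hptil
end
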